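/- arXiv:1808.01125 — 6 statements merged into one kernel-verified Lean document; each statement's English description precedes it below -/
import Mathlib

section
/- For all r ∈ (0,1), 8 sin²(rπ/2) > 9 sin²(rπ/3). -/
/-! With `x = rπ/6` and `u = sin² x`, the triple- and double-angle formulas give
`8 sin²(3x) - 9 sin²(2x) = 4u (32u² - 39u + 9)`. For `0 < x < π/6` we have `0 < u < 1/4`,
and the quadratic has no root below `1/4`. -/

open Real

lemma eight_mul_sin_three_mul_sq_sub_nine_mul_sin_two_mul_sq (x : ℝ) :
    8 * sin (3 * x) ^ 2 - 9 * sin (2 * x) ^ 2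
      = 4 * sin x ^ 2 * (32 * (sin x ^ 2) ^ 2 - 39 * sin x ^ 2 + 9) := by
  rw [sin_three_mul, sin_two_mul, mul_pow, mul_pow, cos_sq']
  ring

lemma quadratic_pos_of_le_quarter {u : ℝ} (hu : u ≤ 1 / 4) : 0 < 32 * u ^ 2 - 39 * u + 9 := by
  nlinarith

lemma nine_mul_sin_two_mul_sq_lt {x : ℝ} (hx0 : 0 < x) (hx : x < π / 6) :
    9 * sin (2 * x) ^ 2 < 8 * sin (3 * x) ^ 2 := by
  have hsin_pos : 0 < sin x := sin_pos_of_pos_of_lt_pi hx0 (by linarith [pi_pos])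
  have hsin_lt : sin x < 1 / 2 := by
    rw [← sin_pi_div_six]
    exact sin_lt_sin_of_lt_of_le_pi_div_two (by linarith [pi_pos]) (by linarith [pi_pos]) hx
  have hquad := quadratic_pos_of_le_quarter (u := sin x ^ 2) (by nlinarith)
  have := eight_mul_sin_three_mul_sq_sub_nine_mul_sin_two_mul_sq x
  nlinarith [mul_pos (pow_pos hsin_pos 2) hquad]

theorem stmt_6 (r : ℝ) (hr0 : 0 < r) (hr1 : r < 1) :
    8 * (Real.sin (r * π / 2))^2 > 9 * (Real.sin (r * π / 3))^2 := by
  have hx0 : 0 < r * π / 6 := by positivity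
  have hx : r * π / 6 < π / 6 := by nlinarith [pi_pos]
  have key := nine_mul_sin_two_mul_sq_lt hx0 hx
  rwa [show 2 * (r * π / 6) = r * π / 3 by ring, show 3 * (r * π / 6) = r * π / 2 by ring] at key
end

section
/- For r ∈ (0,1), the sequence M ↦ (4M²/(rπ²(M-1)²)) sin²((M-1)rπ/(2M)), M ≥ 2, is strictly decreasing and converges to (4/(rπ²)) sin²(rπ/2). -/
/-!
Writing `θ_M = (1 - 1/M) · rπ/2`, the `M`-th term equals `r · sinc(θ_M)²`. The angles `θ_M`
increase to `rπ/2 < π`, while `sinc` is nonnegative and strictly decreasing on `[0, π]` because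
`x cos x < sin x` on `(0, π)`; continuity of `sinc` gives the limit.
-/

open Real Filter Topology

namespace Real

lemma mul_cos_lt_sin {x : ℝ} (hx₀ : 0 < x) (hxπ : x < π) : x * cos x < sin x := by
  have hsin : 0 < sin x := sin_pos_of_pos_of_lt_pi hx₀ hxπ
  rcases lt_or_ge x (π / 2) with hx | hx
  · have hcos : 0 < cos x := cos_pos_of_mem_Ioo ⟨by linarith [pi_pos], hx⟩
    have htan := lt_tan hx₀ hx
    rw [tan_eq_sin_div_cos, lt_div_iff₀ hcos] at htan
    exact htan
  · have hcos : cos x ≤ 0 := cos_nonpos_of_pi_div_two_le_of_le hx (by linarith)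
    nlinarith

lemma strictAntiOn_sinc : StrictAntiOn sinc (Set.Icc 0 π) := by
  refine strictAntiOn_of_deriv_neg (convex_Icc 0 π) continuous_sinc.continuousOn ?_
  intro x hx
  rw [interior_Icc] at hx
  have hx₀ : x ≠ 0 := hx.1.ne'
  have hsinc : sinc =ᶠ[𝓝 x] fun t => sin t / t := by
    filter_upwards [isOpen_ne.mem_nhds hx₀] with t ht
    exact sinc_of_ne_zero ht
  have hderiv : HasDerivAt sinc ((cos x * x - sin x * 1) / x ^ 2) x :=
    ((hasDerivAt_sin x).div (hasDerivAt_id x) hx₀).congr_of_eventuallyEq hsinc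
  rw [hderiv.deriv]
  have := mul_cos_lt_sin hx.1 hx.2
  exact div_neg_of_neg_of_pos (by linarith) (by positivity)

lemma sinc_nonneg_of_mem_Icc {x : ℝ} (hx : x ∈ Set.Icc 0 π) : 0 ≤ sinc x := by
  rcases eq_or_ne x 0 with rfl | hx₀
  · simp [sinc_zero]
  · rw [sinc_of_ne_zero hx₀]
    exact div_nonneg (sin_nonneg_of_nonneg_of_le_pi hx.1 hx.2) hx.1

lemma strictAntiOn_sinc_sq : StrictAntiOn (fun x => sinc x ^ 2) (Set.Icc 0 π) :=
  fun _ ha _ hb hab =>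
    pow_lt_pow_left₀ (strictAntiOn_sinc ha hb hab) (sinc_nonneg_of_mem_Icc hb) two_ne_zero

end Real

section OneSubInvMul

variable {a : ℝ}

lemma strictMonoOn_one_sub_inv_mul (ha : 0 < a) :
    StrictMonoOn (fun M : ℕ => (1 - (M : ℝ)⁻¹) * a) (Set.Ici 1) := by
  intro M hM N _ hMN
  have hM₀ : (0 : ℝ) < M := by exact_mod_cast hM
  have hMN' : (M : ℝ) < N := by exact_mod_cast hMN
  dsimp only
  gcongr

lemma one_sub_inv_mul_mem_Icc (ha : 0 ≤ a) {M : ℕ} (hM : 1 ≤ M) :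
    (1 - (M : ℝ)⁻¹) * a ∈ Set.Icc 0 a := by
  have hM' : (1 : ℝ) ≤ M := by exact_mod_cast hM
  have hinv₀ : 0 ≤ (M : ℝ)⁻¹ := by positivity
  have hinv₁ : (M : ℝ)⁻¹ ≤ 1 := inv_le_one_of_one_le₀ hM'
  constructor <;> nlinarith

lemma tendsto_one_sub_inv_mul (a : ℝ) :
    Tendsto (fun M : ℕ => (1 - (M : ℝ)⁻¹) * a) atTop (𝓝 a) := by
  simpa using (tendsto_inv_atTop_nhds_zero_nat.const_sub 1).mul_const a

end OneSubInvMul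

lemma four_mul_sq_div_mul_sin_sq_eq_mul_sinc_sq {r : ℝ} (hr : r ≠ 0) {M : ℕ} (hM : 2 ≤ M) :
    4 * (M : ℝ)^2 / (r * π^2 * ((M : ℝ) - 1)^2) * (sin (((M : ℝ) - 1) * r * π / (2 * M)))^2 =
      r * sinc ((1 - (M : ℝ)⁻¹) * (r * π / 2)) ^ 2 := by
  have hM' : (2 : ℝ) ≤ M := by exact_mod_cast hM
  have hM₀ : (M : ℝ) ≠ 0 := by linarith
  have hM₁ : (M : ℝ) - 1 ≠ 0 := by linarith
  have hangle : (1 - (M : ℝ)⁻¹) * (r * π / 2) = ((M : ℝ) - 1) * r * π / (2 * M) := by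
    field_simp
  have hangle₀ : ((M : ℝ) - 1) * r * π / (2 * M) ≠ 0 := by
    have := pi_pos.ne'
    positivity
  rw [hangle, sinc_of_ne_zero hangle₀]
  field_simp
  ring

lemma mul_sinc_sq_half_mul_pi {r : ℝ} (hr : r ≠ 0) :
    r * sinc (r * π / 2) ^ 2 = 4 / (r * π^2) * (sin (r * π / 2))^2 := by
  have := pi_pos.ne'
  rw [sinc_of_ne_zero (by positivity)]
  field_simp
  ring

theorem stmt_9 (r : ℝ) (hr0 : 0 < r) (hr1 : r < 1) :
    StrictAntiOn
      (fun M : ℕ =>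
        4 * (M : ℝ)^2 / (r * π^2 * ((M : ℝ) - 1)^2) *
          (Real.sin (((M : ℝ) - 1) * r * π / (2 * M)))^2)
      (Set.Ici 2) ∧
    Filter.Tendsto
      (fun M : ℕ =>
        4 * (M : ℝ)^2 / (r * π^2 * ((M : ℝ) - 1)^2) *
          (Real.sin (((M : ℝ) - 1) * r * π / (2 * M)))^2)
      Filter.atTop (nhds (4 / (r * π^2) * (Real.sin (r * π / 2))^2)) := by
  have ha : 0 < r * π / 2 := by positivity
  have haπ : r * π / 2 ≤ π := by nlinarith [pi_pos]
  have hmem {M : ℕ} (hM : M ∈ Set.Ici 2) : (1 - (M : ℝ)⁻¹) * (r * π / 2) ∈ Set.Icc 0 π :=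
    Set.Icc_subset_Icc_right haπ (one_sub_inv_mul_mem_Icc ha.le (one_le_two.trans hM))
  constructor
  · intro M hM N hN hMN
    simp only [four_mul_sq_div_mul_sin_sq_eq_mul_sinc_sq hr0.ne' hM,
      four_mul_sq_div_mul_sin_sq_eq_mul_sinc_sq hr0.ne' hN]
    refine mul_lt_mul_of_pos_left (strictAntiOn_sinc_sq (hmem hM) (hmem hN) ?_) hr0
    exact strictMonoOn_one_sub_inv_mul ha (Set.mem_Ici.mpr (one_le_two.trans hM))
      (Set.mem_Ici.mpr (one_le_two.trans hN)) hMN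
  · rw [← mul_sinc_sq_half_mul_pi hr0.ne']
    refine (((continuous_sinc.pow 2).const_mul r).tendsto _).comp
      (tendsto_one_sub_inv_mul _) |>.congr' ?_
    filter_upwards [eventually_ge_atTop 2] with M hM
    exact (four_mul_sq_div_mul_sin_sq_eq_mul_sinc_sq hr0.ne' hM).symm
end

section
/- Let H be a Hilbert space and f₁,…,f_M and g₁,…,g_M two linearly independent families in H, with spans F and G. Then H = F ⊕ G^⊥ if and only if the M×M Gram-type matrix [(g_i, f_j)_H] is invertible. -/
open RealInnerProductSpace

/-!
Write `F` and `G` for the two spans and `A` for the matrix. The `i`-th entry of `A c` is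
`⟪g i, ∑ j, c j • f j⟫`, so `A c = 0` exactly when `∑ j, c j • f j ∈ Gᗮ`; since the `f j` are
independent, `A` is injective iff `F ⊓ Gᗮ = ⊥`. Disjointness already forces `F ⊔ Gᗮ = ⊤`: the
projection onto `G` along `Gᗮ` is injective on `F`, hence surjective onto `G` because
`dim F = M = dim G`.
-/

theorem Submodule.isCompl_of_disjoint_of_finrank_eq {K V : Type*} [DivisionRing K]
    [AddCommGroup V] [Module K V] {p q r : Submodule K V} [FiniteDimensional K p]
    (hpq : IsCompl p q) (hrq : Disjoint r q) (hrank : Module.finrank K r = Module.finrank K p) :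
    IsCompl r q := by
  let π : r →ₗ[K] p := p.projectionOnto q hpq ∘ₗ r.subtype
  have hπ_inj : Function.Injective π := by
    refine (injective_iff_map_eq_zero π).2 fun x hx => ?_
    exact Subtype.ext <| disjoint_def.1 hrq x x.2 ((projectionOnto_apply_eq_zero_iff hpq).1 hx)
  have : FiniteDimensional K r := Module.Finite.of_injective π hπ_inj
  have hπ_surj : Function.Surjective π :=
    (LinearMap.injective_iff_surjective_of_finrank_eq_finrank hrank).1 hπ_inj
  refine ⟨hrq, codisjoint_iff_exists_add_eq.2 fun z => ?_⟩
  obtain ⟨x, hx⟩ := hπ_surj (p.projectionOnto q hpq z)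
  refine ⟨x, z - x, x.2, (projectionOnto_apply_eq_zero_iff hpq).1 ?_, add_sub_cancel _ _⟩
  rw [map_sub, sub_eq_zero]
  exact hx.symm

theorem LinearIndependent.disjoint_span_range_iff {ι R M : Type*} [Fintype ι] [Ring R]
    [AddCommGroup M] [Module R M] {f : ι → M} (hf : LinearIndependent R f) (p : Submodule R M) :
    Disjoint (Submodule.span R (Set.range f)) p ↔ ∀ c : ι → R, ∑ j, c j • f j ∈ p → c = 0 := by
  simp only [Submodule.disjoint_def, Submodule.mem_span_range_iff_exists_fun]
  constructor
  · intro h c hc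
    exact funext fun i => Fintype.linearIndependent_iff.1 hf c (h _ ⟨c, rfl⟩ hc) i
  · rintro h _ ⟨c, rfl⟩ hc
    simp [h c hc]

section

open Matrix

variable {ι E : Type*} [NormedAddCommGroup E] [InnerProductSpace ℝ E]

theorem Submodule.mem_orthogonal_span_range_iff {g : ι → E} {x : E} :
    x ∈ (span ℝ (Set.range g))ᗮ ↔ ∀ i, ⟪g i, x⟫ = 0 := by
  rw [← span_singleton_le_iff_mem, ← isOrtho_iff_le, isOrtho_comm, isOrtho_span]
  simp

theorem Matrix.mulVec_of_inner [Fintype ι] (f g : ι → E) (c : ι → ℝ) :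
    Matrix.of (fun i j => ⟪g i, f j⟫) *ᵥ c = fun i => ⟪g i, ∑ j, c j • f j⟫ := by
  ext i
  simp [Matrix.mulVec, dotProduct, inner_sum, real_inner_smul_right, mul_comm]

theorem disjoint_span_orthogonal_span_iff_isUnit [Fintype ι] [DecidableEq ι] {f : ι → E}
    (hf : LinearIndependent ℝ f) (g : ι → E) :
    Disjoint (Submodule.span ℝ (Set.range f)) (Submodule.span ℝ (Set.range g))ᗮ
      ↔ IsUnit (Matrix.of fun i j => ⟪g i, f j⟫) := by
  rw [hf.disjoint_span_range_iff, ← Matrix.mulVec_injective_iff_isUnit,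
    ← Matrix.coe_mulVecLin, injective_iff_map_eq_zero]
  simp only [Matrix.mulVecLin_apply, Matrix.mulVec_of_inner, funext_iff, Pi.zero_apply,
    Submodule.mem_orthogonal_span_range_iff]

end

theorem stmt_15 {H : Type*} [NormedAddCommGroup H] [InnerProductSpace ℝ H]
    (M : ℕ) (f g : Fin M → H)
    (hf : LinearIndependent ℝ f) (hg : LinearIndependent ℝ g) :
    IsCompl (Submodule.span ℝ (Set.range f)) (Submodule.span ℝ (Set.range g))ᗮ
      ↔ IsUnit (Matrix.of fun i j : Fin M => ⟪g i, f j⟫) := by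
  rw [← disjoint_span_orthogonal_span_iff_isUnit hf]
  refine ⟨IsCompl.disjoint, fun h => ?_⟩
  have : FiniteDimensional ℝ (Submodule.span ℝ (Set.range g)) :=
    FiniteDimensional.span_of_finite ℝ (Set.finite_range g)
  exact Submodule.isCompl_of_disjoint_of_finrank_eq
    (Submodule.span ℝ (Set.range g)).isCompl_orthogonal h
    (by rw [finrank_span_eq_card hf, finrank_span_eq_card hg])
end

section
/- Let H = F ⊕ G^⊥ with F, G spanned by orthonormal families 𝔣 = (f₁,…,f_M) and 𝔤 = (g₁,…,g_M) respectively. Then the squared operator norm of the oblique projection P_F^{G^⊥} equals the reciprocal of the smallest eigenvalue of the matrix [(g_i,f_j)_H][(f_i,g_j)_H]. -/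
/-!
Write `B = crossGram g f = [(g_i, f_j)]`, so that the matrix of the statement is `B Bᵀ`.
If `P x = ∑ c_j f_j`, then `B c = ((g_i, x))_i` because `x - P x ⊥ g_i`; hence `‖P x‖² = |c|²`
and, by Bessel, `|B c|² ≤ ‖x‖²`. As `Bᵀ B` and `B Bᵀ` have the same spectrum, `θ |c|² ≤ |B c|²`,
so `‖P‖² ≤ 1/θ`. Equality is attained at `x = ∑ (B w)_i g_i` for an eigenvector `w` of `Bᵀ B`
with eigenvalue `θ`. Here `B` is invertible: a vector `y ∈ span g` orthogonal to `span f` is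
orthogonal to `P y` and to `y - P y`, hence zero.
-/
open RealInnerProductSpace Matrix

namespace Matrix

variable {n K : Type*} [Fintype n] [DecidableEq n] [Field K]

theorem spectrum_mul_comm (A B : Matrix n n K) : spectrum K (A * B) = spectrum K (B * A) := by
  ext μ
  simp only [mem_spectrum_iff_isRoot_charpoly, charpoly_mul_comm]

theorem hasEigenvalue_toLin'_iff (A : Matrix n n K) (μ : K) :
    Module.End.HasEigenvalue (toLin' A) μ ↔ μ ∈ spectrum K A := by
  rw [Module.End.hasEigenvalue_iff_mem_spectrum, spectrum_toLin']

theorem IsHermitian.mul_dotProduct_self_le {A : Matrix n n ℝ} (hA : A.IsHermitian) {θ : ℝ}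
    (hθ : θ ∈ lowerBounds (spectrum ℝ A)) (c : n → ℝ) :
    θ * (c ⬝ᵥ c) ≤ c ⬝ᵥ (A *ᵥ c) := by
  have hpsd : (A - algebraMap ℝ _ θ).PosSemidef := by
    refine posSemidef_iff_isHermitian_and_spectrum_nonneg.mpr ⟨?_, ?_⟩
    · exact hA.sub (isHermitian_diagonal _)
    · rw [← spectrum.sub_singleton_eq]
      rintro _ ⟨t, ht, _, rfl, rfl⟩
      exact sub_nonneg.mpr (hθ ht)
  have := hpsd.dotProduct_mulVec_nonneg c
  rw [Algebra.algebraMap_eq_smul_one, sub_mulVec, smul_mulVec, one_mulVec, dotProduct_sub,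
    dotProduct_smul, star_trivial, smul_eq_mul, sub_nonneg] at this
  exact this

end Matrix

section CrossGram

variable {H ι κ : Type*} [NormedAddCommGroup H] [InnerProductSpace ℝ H]

def crossGram (g : ι → H) (f : κ → H) : Matrix ι κ ℝ := Matrix.of fun i j => ⟪g i, f j⟫

theorem crossGram_transpose (g : ι → H) (f : κ → H) : (crossGram g f)ᵀ = crossGram f g := by
  ext i j
  exact real_inner_comm _ _

variable [Fintype κ]

theorem crossGram_mulVec (g : ι → H) (f : κ → H) (c : κ → ℝ) :
    crossGram g f *ᵥ c = fun i => ⟪g i, ∑ j, c j • f j⟫ := by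
  ext i
  simp only [mulVec, dotProduct, crossGram, of_apply, inner_sum, real_inner_smul_right, mul_comm]

theorem Orthonormal.norm_sum_smul_sq {e : κ → H} (he : Orthonormal ℝ e) (c : κ → ℝ) :
    ‖∑ j, c j • e j‖ ^ 2 = c ⬝ᵥ c := by
  rw [← real_inner_self_eq_norm_sq, sum_inner]
  simp only [real_inner_smul_left, he.inner_right_fintype, dotProduct]

end CrossGram

def IsObliqueProjection {R H : Type*} [Ring R] [AddCommGroup H] [Module R H] (P : H → H)
    (F K : Submodule R H) : Prop :=
  ∀ x, P x ∈ F ∧ x - P x ∈ K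

section ObliqueProjection

open Submodule Set

variable {H ι : Type*} [NormedAddCommGroup H] [InnerProductSpace ℝ H] [Fintype ι]
  {f g : ι → H} {P : H →L[ℝ] H}

theorem exists_sum_smul_eq_apply_and_crossGram_mulVec
    (hP : IsObliqueProjection P (span ℝ (range f)) (span ℝ (range g))ᗮ) (x : H) :
    ∃ c : ι → ℝ, ∑ j, c j • f j = P x ∧ crossGram g f *ᵥ c = fun i => ⟪g i, x⟫ := by
  obtain ⟨c, hc⟩ := (mem_span_range_iff_exists_fun ℝ).mp (hP x).1
  refine ⟨c, hc, ?_⟩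
  ext i
  have hgi : ⟪g i, x - P x⟫ = 0 :=
    inner_right_of_mem_orthogonal (subset_span (mem_range_self i)) (hP x).2
  rw [inner_sub_right, sub_eq_zero] at hgi
  rw [crossGram_mulVec, hc]
  exact hgi.symm

theorem isUnit_crossGram [DecidableEq ι] (hg : Orthonormal ℝ g)
    (hP : IsObliqueProjection P (span ℝ (range f)) (span ℝ (range g))ᗮ) :
    IsUnit (crossGram g f) := by
  rw [← isUnit_transpose, ← mulVec_injective_iff_isUnit, crossGram_transpose]
  refine (injective_iff_map_eq_zero (crossGram f g).mulVecLin).mpr fun v hv => ?_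
  set y := ∑ i, v i • g i
  have hyf : ∀ j, ⟪y, f j⟫ = 0 := fun j => by
    rw [real_inner_comm]
    simpa [crossGram_mulVec] using congrFun hv j
  have hyPy : ⟪y, P y⟫ = 0 := by
    obtain ⟨c, hc⟩ := (mem_span_range_iff_exists_fun ℝ).mp (hP y).1
    simp [← hc, inner_sum, real_inner_smul_right, hyf]
  have hy_sub : ⟪y, y - P y⟫ = 0 :=
    inner_right_of_mem_orthogonal
      (sum_smul_mem _ v fun i _ => subset_span (mem_range_self i)) (hP y).2
  have hy : y = 0 := by
    rw [inner_sub_right, hyPy, sub_zero, inner_self_eq_zero] at hy_sub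
    exact hy_sub
  ext i
  calc v i = ⟪g i, y⟫ := (hg.inner_right_fintype v i).symm
    _ = 0 := by rw [hy, inner_zero_right]

theorem mul_norm_apply_sq_le_norm_sq [DecidableEq ι] (hf : Orthonormal ℝ f) (hg : Orthonormal ℝ g)
    (hP : IsObliqueProjection P (span ℝ (range f)) (span ℝ (range g))ᗮ) {θ : ℝ}
    (hθ : θ ∈ lowerBounds (spectrum ℝ ((crossGram g f)ᵀ * crossGram g f))) (x : H) :
    θ * ‖P x‖ ^ 2 ≤ ‖x‖ ^ 2 := by
  obtain ⟨c, hc, hBc⟩ := exists_sum_smul_eq_apply_and_crossGram_mulVec hP x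
  have hS : ((crossGram g f)ᵀ * crossGram g f).IsHermitian := by
    simpa using isHermitian_conjTranspose_mul_self (crossGram g f)
  calc θ * ‖P x‖ ^ 2 = θ * (c ⬝ᵥ c) := by rw [← hc, hf.norm_sum_smul_sq]
    _ ≤ c ⬝ᵥ (((crossGram g f)ᵀ * crossGram g f) *ᵥ c) := hS.mul_dotProduct_self_le hθ c
    _ = ∑ i, ⟪g i, x⟫ ^ 2 := by
      rw [← mulVec_mulVec, dotProduct_mulVec, vecMul_transpose, hBc]
      simp only [dotProduct, sq]
    _ ≤ ‖x‖ ^ 2 := by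
      simpa [Real.norm_eq_abs, sq_abs] using hg.sum_inner_products_le (s := Finset.univ) x

theorem exists_ne_zero_norm_sq_eq_mul_norm_apply_sq [DecidableEq ι] (hf : Orthonormal ℝ f)
    (hg : Orthonormal ℝ g)
    (hP : IsObliqueProjection P (span ℝ (range f)) (span ℝ (range g))ᗮ) {θ : ℝ} {w : ι → ℝ}
    (hw : Module.End.HasEigenvector (toLin' ((crossGram g f)ᵀ * crossGram g f)) θ w) :
    ∃ x : H, x ≠ 0 ∧ ‖x‖ ^ 2 = θ * ‖P x‖ ^ 2 := by
  set B := crossGram g f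
  have hB : Function.Injective (B *ᵥ ·) := mulVec_injective_iff_isUnit.mpr (isUnit_crossGram hg hP)
  have hBw : B *ᵥ w ≠ 0 := fun h => hw.2 (hB (by simpa using h))
  have hBtBw : Bᵀ *ᵥ (B *ᵥ w) = θ • w := by
    simpa [mulVec_mulVec] using hw.apply_eq_smul
  refine ⟨∑ i, (B *ᵥ w) i • g i, ?_, ?_⟩
  · rw [← norm_ne_zero_iff, ← pow_ne_zero_iff two_ne_zero, hg.norm_sum_smul_sq]
    exact fun h => hBw (dotProduct_self_eq_zero.mp h)
  · obtain ⟨c, hc, hBc⟩ := exists_sum_smul_eq_apply_and_crossGram_mulVec hP (∑ i, (B *ᵥ w) i • g i)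
    have hcw : c = w := hB (hBc.trans (funext fun i => hg.inner_right_fintype _ i))
    have hBw_sq : (B *ᵥ w) ⬝ᵥ (B *ᵥ w) = w ⬝ᵥ (Bᵀ *ᵥ (B *ᵥ w)) := by
      rw [dotProduct_mulVec w, vecMul_transpose]
    rw [← hc, hcw, hg.norm_sum_smul_sq, hf.norm_sum_smul_sq, hBw_sq, hBtBw, dotProduct_smul,
      smul_eq_mul]

end ObliqueProjection

theorem ContinuousLinearMap.norm_sq_eq_one_div_of_le_of_eq {E F : Type*} [NormedAddCommGroup E]
    [NormedSpace ℝ E] [SeminormedAddCommGroup F] [NormedSpace ℝ F] (P : E →L[ℝ] F) {θ : ℝ}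
    (hle : ∀ x, θ * ‖P x‖ ^ 2 ≤ ‖x‖ ^ 2) {x₀ : E} (hx₀ : x₀ ≠ 0)
    (heq : ‖x₀‖ ^ 2 = θ * ‖P x₀‖ ^ 2) : ‖P‖ ^ 2 = 1 / θ := by
  have hx₀_pos : 0 < ‖x₀‖ ^ 2 := by positivity
  have hθ : 0 < θ := pos_of_mul_pos_left (heq ▸ hx₀_pos) (sq_nonneg _)
  have hPx₀_pos : 0 < ‖P x₀‖ ^ 2 := pos_of_mul_pos_right (heq ▸ hx₀_pos) hθ.le
  have hupper : ‖P‖ ≤ √(1 / θ) := P.opNorm_le_bound (Real.sqrt_nonneg _) fun x => by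
    refine (sq_le_sq₀ (norm_nonneg _) (by positivity)).mp ?_
    rw [mul_pow, Real.sq_sqrt (by positivity), one_div, inv_mul_eq_div, le_div_iff₀ hθ]
    linarith [hle x]
  have hlower : ‖P x₀‖ ^ 2 ≤ ‖P‖ ^ 2 * (θ * ‖P x₀‖ ^ 2) := by
    rw [← heq, ← mul_pow]
    exact pow_le_pow_left₀ (norm_nonneg _) (P.le_opNorm x₀) 2
  apply le_antisymm
  · calc ‖P‖ ^ 2 ≤ √(1 / θ) ^ 2 := pow_le_pow_left₀ (norm_nonneg _) hupper 2
      _ = 1 / θ := Real.sq_sqrt (by positivity)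
  · rw [div_le_iff₀ hθ]
    nlinarith

theorem stmt_16_general {H : Type*} [NormedAddCommGroup H] [InnerProductSpace ℝ H]
    (M : ℕ) (f g : Fin M → H)
    (hf : Orthonormal ℝ f) (hg : Orthonormal ℝ g)
    (P : H →L[ℝ] H)
    (hP : ∀ x : H, P x ∈ Submodule.span ℝ (Set.range f) ∧
        x - P x ∈ (Submodule.span ℝ (Set.range g))ᗮ)
    (θ : ℝ)
    (hθ : IsLeast {t : ℝ | Module.End.HasEigenvalue
        (Matrix.toLin' ((Matrix.of fun i j : Fin M => ⟪g i, f j⟫) *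
          (Matrix.of fun i j : Fin M => ⟪f i, g j⟫))) t} θ) :
    ‖P‖^2 = 1 / θ := by
  change IsLeast {t | Module.End.HasEigenvalue (toLin' (crossGram g f * crossGram f g)) t} θ at hθ
  rw [← crossGram_transpose g f] at hθ
  simp only [hasEigenvalue_toLin'_iff, Set.ofPred_mem_eq] at hθ
  rw [spectrum_mul_comm] at hθ
  obtain ⟨w, hw⟩ := ((hasEigenvalue_toLin'_iff _ θ).mpr hθ.1).exists_hasEigenvector
  obtain ⟨x₀, hx₀, heq⟩ := exists_ne_zero_norm_sq_eq_mul_norm_apply_sq hf hg hP hw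
  exact P.norm_sq_eq_one_div_of_le_of_eq (mul_norm_apply_sq_le_norm_sq hf hg hP hθ.2) hx₀ heq

theorem stmt_16 {H : Type*} [NormedAddCommGroup H] [InnerProductSpace ℝ H]
    (M : ℕ) (f g : Fin M → H)
    (hf : Orthonormal ℝ f) (hg : Orthonormal ℝ g)
    (hcompl : IsCompl (Submodule.span ℝ (Set.range f))
        (Submodule.span ℝ (Set.range g))ᗮ)
    (P : H →L[ℝ] H)
    (hP : ∀ x : H, P x ∈ Submodule.span ℝ (Set.range f) ∧
        x - P x ∈ (Submodule.span ℝ (Set.range g))ᗮ)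
    (θ : ℝ)
    (hθ : IsLeast {t : ℝ | Module.End.HasEigenvalue
        (Matrix.toLin' ((Matrix.of fun i j : Fin M => ⟪g i, f j⟫) *
          (Matrix.of fun i j : Fin M => ⟪f i, g j⟫))) t} θ) :
    ‖P‖^2 = 1 / θ :=
  stmt_16_general M f g hf hg P hP θ hθ
end

section
/- Let c₁,…,c_M be pairwise distinct points in (0,π). Then the M×M matrix Ξ with entries Ξ_{ij} = sin(i c_j) is invertible. -/
/-!
Since `sin ((i + 1) x) = U_i (cos x) sin x` with `U_i` the Chebyshev polynomial of the second kind,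
of degree `i` and leading coefficient `2 ^ i`, the matrix is a polynomial Vandermonde matrix in the
nodes `cos c_j`, which are distinct because `cos` is injective on `[0, π]`, with its columns scaled
by `sin c_j ≠ 0`.
-/

open Real Polynomial Polynomial.Chebyshev Matrix

theorem Matrix.det_eval_matrixOfPolynomials {R : Type*} [CommRing R] {n : ℕ} (v : Fin n → R)
    (p : Fin n → R[X]) (h_deg : ∀ i, (p i).natDegree = i) :
    (of fun i j => (p j).eval (v i)).det = (vandermonde v).det * ∏ i, (p i).leadingCoeff := by
  rw [eval_matrixOfPolynomials_eq_vandermonde_mul_matrixOfPolynomials v p (fun i ↦ (h_deg i).le),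
    det_mul, det_of_isUpperTriangular (matrixOfPolynomials_blockTriangular p (fun i ↦ (h_deg i).le))]
  congr 1
  refine Finset.prod_congr rfl fun i _ ↦ ?_
  rw [of_apply, ← coeff_natDegree, h_deg]

theorem stmt_17 (M : ℕ) (c : Fin M → ℝ) (hc : Function.Injective c)
    (hmem : ∀ j, c j ∈ Set.Ioo (0 : ℝ) π) :
    IsUnit (Matrix.of fun i j : Fin M => Real.sin (((i : ℕ) + 1 : ℝ) * c j)) := by
  have hsin : ∀ j, sin (c j) ≠ 0 := fun j ↦ (sin_pos_of_pos_of_lt_pi (hmem j).1 (hmem j).2).ne'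
  have hcos : Function.Injective fun j ↦ cos (c j) := fun j k h ↦
    hc (injOn_cos (Set.Ioo_subset_Icc_self (hmem j)) (Set.Ioo_subset_Icc_self (hmem k)) h)
  have hfactor : (of fun i j : Fin M => sin (((i : ℕ) + 1 : ℝ) * c j)) =
      (of fun j i : Fin M => (U ℝ (i : ℕ)).eval (cos (c j)))ᵀ * diagonal fun j ↦ sin (c j) := by
    ext i j
    simp
  rw [hfactor, isUnit_iff_isUnit_det, det_mul, det_transpose, det_diagonal,
    det_eval_matrixOfPolynomials _ _ fun i ↦ natDegree_U_natCast ℝ i]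
  simp [Finset.prod_ne_zero_iff, hsin, det_vandermonde_ne_zero_iff.mpr hcos, leadingCoeff_U_natCast]
end

section
/- Let c₁,…,c_M be pairwise distinct points in (0,π). Then the M×M matrix Ξ with entries Ξ_{ij} = cos((i-1) c_j) is invertible. -/
open Real Matrix Polynomial

/-!
Since `cos (i * θ) = Tᵢ (cos θ)` for the Chebyshev polynomial `Tᵢ` of degree `i`, the matrix is
(the transpose of) a matrix of values of polynomials of degrees `0, …, M - 1` at the points
`cos c_j`. Such a matrix factors as a Vandermonde matrix times the upper triangular matrix of the
polynomials' coefficients, so its determinant is the Vandermonde determinant times the product of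
the leading coefficients. Both are nonzero, because `cos` is injective on `(0, π)`.
-/

section MatrixOfPolynomials

variable {R : Type*} [CommRing R] {n : ℕ}

theorem det_matrixOfPolynomials_eq_prod_leadingCoeff (p : Fin n → R[X])
    (h_deg : ∀ i, (p i).natDegree = i) :
    (Matrix.of fun i j : Fin n => (p j).coeff i).det = ∏ i, (p i).leadingCoeff := by
  rw [det_of_isUpperTriangular (matrixOfPolynomials_blockTriangular p fun i => (h_deg i).le)]
  refine Finset.prod_congr rfl fun i _ => ?_
  rw [Matrix.of_apply, ← coeff_natDegree, h_deg]

theorem det_eval_matrixOfPolynomials_eq_det_vandermonde_mul (v : Fin n → R) (p : Fin n → R[X])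
    (h_deg : ∀ i, (p i).natDegree = i) :
    (Matrix.of fun i j => (p j).eval (v i)).det =
      (vandermonde v).det * ∏ i, (p i).leadingCoeff := by
  rw [eval_matrixOfPolynomials_eq_vandermonde_mul_matrixOfPolynomials v p fun i => (h_deg i).le,
    det_mul, det_matrixOfPolynomials_eq_prod_leadingCoeff p h_deg]

theorem det_eval_matrixOfPolynomials_ne_zero [IsDomain R] {v : Fin n → R}
    (hv : Function.Injective v) {p : Fin n → R[X]} (h_deg : ∀ i, (p i).degree = (i : ℕ)) :
    (Matrix.of fun i j => (p j).eval (v i)).det ≠ 0 := by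
  have hp : ∀ i, p i ≠ 0 := fun i h => by simpa [h] using h_deg i
  rw [det_eval_matrixOfPolynomials_eq_det_vandermonde_mul v p
    fun i => natDegree_eq_of_degree_eq_some (h_deg i)]
  exact mul_ne_zero (det_vandermonde_ne_zero_iff.mpr hv)
    (Finset.prod_ne_zero_iff.mpr fun i _ => leadingCoeff_ne_zero.mpr (hp i))

end MatrixOfPolynomials

theorem stmt_18 (M : ℕ) (c : Fin M → ℝ) (hc : Function.Injective c)
    (hmem : ∀ j, c j ∈ Set.Ioo (0 : ℝ) π) :
    IsUnit (Matrix.of fun i j : Fin M => Real.cos ((i : ℕ) * c j)) := by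
  have hcos : Function.Injective fun j => cos (c j) := fun a b hab =>
    hc (injOn_cos (Set.Ioo_subset_Icc_self (hmem a)) (Set.Ioo_subset_Icc_self (hmem b)) hab)
  have hchebyshev : (Matrix.of fun i j : Fin M => cos ((i : ℕ) * c j)) =
      (Matrix.of fun i j : Fin M => (Chebyshev.T ℝ (j : ℕ)).eval (cos (c i)))ᵀ := by
    ext i j
    simp [Chebyshev.T_real_cos]
  rw [hchebyshev, isUnit_iff_isUnit_det, det_transpose, isUnit_iff_ne_zero]
  exact det_eval_matrixOfPolynomials_ne_zero hcos fun i => by rw [Chebyshev.degree_T, Int.natAbs_natCast]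
end
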